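/- Let 2 < p < ∞ and V(x) = |x₁|^{-2/p} χ_{B(0,1)}(x) on ℝ^d, d ≥ 3. Assume the kernel Γ̃(x,y) of L^{-1/2} (L = -Δ + V) satisfies Γ̃(x,y) ≥ c |x-y|^{1-d} for x, y ∈ B(0,1). Then with f = χ_{B(0,1)}, V^{1/2} L^{-1/2} f(x) ≥ c' |x₁|^{-1/p} χ_{B(0,1)}(x) for some c' > 0, and hence V^{1/2} L^{-1/2} f ∉ L^p(ℝ^d); in particular V^{1/2}L^{-1/2} is not bounded on L^p(ℝ^d). -/

import Mathlib

open MeasureTheory Real Set ENNReal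


lemma aux_top (d : ℕ) (hd : 3 ≤ d) (i0 : Fin d) :
    ∫⁻ x in Metric.ball (0 : EuclideanSpace ℝ (Fin d)) 1, ENNReal.ofReal |x i0|⁻¹ = ⊤ := by
  set a : ℝ := (d : ℝ)⁻¹ with ha_def
  have hd0 : (0:ℝ) < d := by positivity
  have ha : 0 < a := by positivity
  set e := (MeasurableEquiv.toLp 2 (Fin d → ℝ)).symm with he
  set s : ℕ → Fin d → Set ℝ := fun n i =>
    if i = i0 then Ioo (a / 2 ^ (n+1)) (a / 2 ^ n) else Ioo (-a) a with hs
  set S : ℕ → Set (EuclideanSpace ℝ (Fin d)) := fun n => e ⁻¹' (univ.pi (s n)) with hS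
  have hmeas : ∀ n, MeasurableSet (univ.pi (s n)) := by
    intro n
    exact MeasurableSet.univ_pi fun i => by by_cases h : i = i0 <;> simp [hs, h, measurableSet_Ioo]
  have hSmeas : ∀ n, MeasurableSet (S n) := fun n => e.measurable (hmeas n)
  have hmem : ∀ n x, x ∈ S n → (∀ i, x i ∈ s n i) := fun n x hx i => hx i (mem_univ i)
  have hmem0 : ∀ n x, x ∈ S n → x i0 ∈ Ioo (a / 2 ^ (n+1)) (a / 2 ^ n) := by
    intro n x hx
    have h := hmem n x hx i0
    simpa [hs] using h
  have hbound : ∀ n (x : EuclideanSpace ℝ (Fin d)), x ∈ S n → ∀ i, |x i| ≤ a := by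
    intro n x hx i
    have h := hmem n x hx i
    by_cases hi : i = i0
    · rw [hs] at h; simp only [if_pos hi] at h
      obtain ⟨h1, h2⟩ := h
      have hp1 : 0 < x i := lt_trans (by positivity) h1
      have h3 : x i < a := lt_of_lt_of_le h2 (div_le_self ha.le (one_le_pow₀ one_le_two))
      rw [abs_of_pos hp1]; exact h3.le
    · rw [hs] at h; simp only [if_neg hi] at h
      exact (abs_lt.2 h).le
  have hSball : ∀ n, S n ⊆ Metric.ball (0 : EuclideanSpace ℝ (Fin d)) 1 := by
    intro n x hx
    rw [Metric.mem_ball, dist_zero_right]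
    have h1 : ‖x‖ ≤ Real.sqrt (∑ i : Fin d, a ^ 2) := by
      rw [EuclideanSpace.norm_eq]
      apply Real.sqrt_le_sqrt
      apply Finset.sum_le_sum
      intro i _
      have := hbound n x hx i
      rw [Real.norm_eq_abs]
      nlinarith [abs_nonneg (x i)]
    refine lt_of_le_of_lt h1 ?_
    rw [Finset.sum_const, Finset.card_univ, Fintype.card_fin, nsmul_eq_mul]
    have h2 : (d:ℝ) * a ^ 2 = a := by field_simp [ha_def]; rw [ha_def]; field_simp
    rw [h2]
    have h3 : a < 1 := by
      rw [ha_def, inv_lt_one_iff₀]; right; exact_mod_cast by omega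
    calc Real.sqrt a < Real.sqrt 1 := Real.sqrt_lt_sqrt ha.le h3
    _ = 1 := Real.sqrt_one
  have hdisj : Pairwise (Function.onFun Disjoint S) := by
    intro n m hnm
    rw [Function.onFun]
    rw [Set.disjoint_left]
    intro x hxn hxm
    have h1 := hmem0 n x hxn
    have h2 := hmem0 m x hxm
    rcases lt_or_gt_of_ne hnm with h | h
    · have : a / 2 ^ m ≤ a / 2 ^ (n+1) :=
        div_le_div_of_nonneg_left ha.le (by positivity) (pow_le_pow_right₀ one_le_two h)
      exact absurd (lt_of_lt_of_le h2.2 this) (not_lt.2 h1.1.le)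
    · have : a / 2 ^ n ≤ a / 2 ^ (m+1) :=
        div_le_div_of_nonneg_left ha.le (by positivity) (pow_le_pow_right₀ one_le_two h)
      exact absurd (lt_of_lt_of_le h1.2 this) (not_lt.2 h2.1.le)
  -- volume of S n
  have hvolS : ∀ n, volume (S n) = ENNReal.ofReal (a / 2 ^ (n+1)) * ENNReal.ofReal (2 * a) ^ (d - 1) := by
    intro n
    rw [hS]
    rw [(EuclideanSpace.volume_preserving_symm_measurableEquiv_toLp (Fin d)).measure_preimage
      (hmeas n).nullMeasurableSet]
    rw [MeasureTheory.volume_pi, Measure.pi_pi]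
    rw [← Finset.mul_prod_erase Finset.univ _ (Finset.mem_univ i0)]
    have h1 : volume (s n i0) = ENNReal.ofReal (a / 2 ^ (n+1)) := by
      simp only [hs, if_pos rfl, Real.volume_Ioo]
      congr 1
      field_simp
      ring
    rw [h1]
    congr 1
    have h2 : ∀ i ∈ Finset.univ.erase i0, volume (s n i) = ENNReal.ofReal (2 * a) := by
      intro i hi
      have : i ≠ i0 := Finset.ne_of_mem_erase hi
      simp only [hs, if_neg this, Real.volume_Ioo]
      congr 1; ring
    rw [Finset.prod_congr rfl h2, Finset.prod_const, Finset.card_erase_of_mem (Finset.mem_univ i0),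
      Finset.card_univ, Fintype.card_fin]
  -- lower bound on each piece
  have hpiece : ∀ n, ENNReal.ofReal (1/2) * ENNReal.ofReal (2 * a) ^ (d - 1)
      ≤ ∫⁻ x in S n, ENNReal.ofReal |x i0|⁻¹ := by
    intro n
    have hstep : ∫⁻ x in S n, (ENNReal.ofReal (2 ^ n / a) : ℝ≥0∞)
        ≤ ∫⁻ x in S n, ENNReal.ofReal |x i0|⁻¹ := by
      apply setLIntegral_mono' (hSmeas n)
      intro x hx
      apply ENNReal.ofReal_le_ofReal
      have h := hmem0 n x hx
      have hp1 : 0 < x i0 := lt_trans (by positivity) h.1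
      rw [abs_of_pos hp1]
      have : (2:ℝ) ^ n / a = (a / 2 ^ n)⁻¹ := by field_simp
      rw [this]
      exact inv_anti₀ hp1 h.2.le
    refine le_trans ?_ hstep
    rw [setLIntegral_const, hvolS n, ← mul_assoc]
    gcongr
    rw [← ENNReal.ofReal_mul (by positivity)]
    apply ENNReal.ofReal_le_ofReal
    have h2 : (2:ℝ) ^ n / a * (a / 2 ^ (n+1)) = 1/2 := by
      field_simp
      ring
    rw [h2]
  -- conclude
  rw [← top_le_iff]
  calc (⊤ : ℝ≥0∞) = ∑' n : ℕ, ENNReal.ofReal (1/2) * ENNReal.ofReal (2 * a) ^ (d - 1) := by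
        rw [ENNReal.tsum_const_eq_top_of_ne_zero]
        apply mul_ne_zero
        · simp [ENNReal.ofReal_eq_zero]
        · exact pow_ne_zero _ (by simp [ENNReal.ofReal_eq_zero]; positivity)
    _ ≤ ∑' n : ℕ, ∫⁻ x in S n, ENNReal.ofReal |x i0|⁻¹ := ENNReal.tsum_le_tsum hpiece
    _ = ∫⁻ x in ⋃ n, S n, ENNReal.ofReal |x i0|⁻¹ := (lintegral_iUnion hSmeas hdisj _).symm
    _ ≤ ∫⁻ x in Metric.ball (0 : EuclideanSpace ℝ (Fin d)) 1, ENNReal.ofReal |x i0|⁻¹ :=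
        lintegral_mono_set (iUnion_subset hSball)


/-- For `2 < p`, `V(x) = |x₁|^{-2/p} χ_{B(0,1)}(x)`, and `f = χ_{B(0,1)}`: if the kernel
`Γ̃` of `L^{-1/2}` satisfies the lower bound `Γ̃(x,y) ≥ c |x-y|^{1-d}` on the unit ball,
then `V^{1/2} L^{-1/2} f(x) ≥ c' |x₁|^{-1/p}` on the unit ball, and
`V^{1/2} L^{-1/2} f ∉ L^p(ℝ^d)`; so `V^{1/2} L^{-1/2}` is not bounded on `L^p`. -/
theorem stmt14 (d : ℕ) (hd : 3 ≤ d) (p : ℝ) (hp : 2 < p)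
    (V : EuclideanSpace ℝ (Fin d) → ℝ)
    (hVdef : ∀ x, V x = Set.indicator (Metric.ball (0 : EuclideanSpace ℝ (Fin d)) 1)
      (fun z => |z ⟨0, by omega⟩| ^ (-2 / p)) x)
    (Γ' : EuclideanSpace ℝ (Fin d) → EuclideanSpace ℝ (Fin d) → ℝ≥0∞)
    (c : ℝ) (hc : 0 < c)
    (hlower : ∀ x y : EuclideanSpace ℝ (Fin d),
      x ∈ Metric.ball (0 : EuclideanSpace ℝ (Fin d)) 1 →
      y ∈ Metric.ball (0 : EuclideanSpace ℝ (Fin d)) 1 →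
      ENNReal.ofReal (c * ‖x - y‖ ^ (1 - (d : ℝ))) ≤ Γ' x y) :
    (∃ c' : ℝ, 0 < c' ∧
      ∀ x ∈ Metric.ball (0 : EuclideanSpace ℝ (Fin d)) 1,
        ENNReal.ofReal (c' * |x ⟨0, by omega⟩| ^ (-1 / p))
          ≤ ENNReal.ofReal (V x ^ (1 / 2 : ℝ)) *
              ∫⁻ y in Metric.ball (0 : EuclideanSpace ℝ (Fin d)) 1, Γ' x y) ∧
    ∫⁻ x, (ENNReal.ofReal (V x ^ (1 / 2 : ℝ)) *
        ∫⁻ y in Metric.ball (0 : EuclideanSpace ℝ (Fin d)) 1, Γ' x y) ^ p = ⊤ := by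
  have hp0 : (0:ℝ) < p := by linarith
  set i0 : Fin d := ⟨0, by omega⟩ with hi0
  set B := Metric.ball (0 : EuclideanSpace ℝ (Fin d)) 1 with hB
  set κ : ℝ := c * 2 ^ ((1:ℝ) - d) with hκdef
  have hκ : 0 < κ := mul_pos hc (Real.rpow_pos_of_pos two_pos _)
  have hμB0 : volume B ≠ 0 := (Metric.measure_ball_pos volume 0 one_pos).ne'
  have hμBtop : volume B ≠ ⊤ := measure_ball_lt_top.ne
  set c' : ℝ := κ * (volume B).toReal with hc'def
  have hc' : 0 < c' := mul_pos hκ (ENNReal.toReal_pos hμB0 hμBtop)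
  -- the half-power on the ball
  have hVhalf : ∀ x ∈ B, V x ^ (1/2 : ℝ) = |x i0| ^ (-1 / p) := by
    intro x hx
    rw [hVdef x, Set.indicator_of_mem hx]
    rw [← Real.rpow_mul (abs_nonneg _)]
    congr 1
    ring
  -- lower bound on kernel integral
  have hker : ∀ x ∈ B, ENNReal.ofReal κ * volume B ≤ ∫⁻ y in B, Γ' x y := by
    intro x hx
    rw [← setLIntegral_const B (ENNReal.ofReal κ)]
    apply lintegral_mono_ae
    haveI : Nonempty (Fin d) := ⟨i0⟩
    have hne : ∀ᵐ y ∂(volume.restrict B), y ≠ x := by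
      apply ae_restrict_of_ae
      have : volume ({x} : Set (EuclideanSpace ℝ (Fin d))) = 0 := measure_singleton x
      rw [ae_iff]
      convert this using 2
      ext y; simp
    have hmemB : ∀ᵐ y ∂(volume.restrict B), y ∈ B :=
      ae_restrict_mem Metric.isOpen_ball.measurableSet
    filter_upwards [hne, hmemB] with y hne hyB
    refine le_trans ?_ (hlower x y hx hyB)
    apply ENNReal.ofReal_le_ofReal
    apply mul_le_mul_of_nonneg_left _ hc.le
    have hpos : 0 < ‖x - y‖ := by
      rw [norm_pos_iff, sub_ne_zero]; exact fun h => hne h.symm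
    have hlt2 : ‖x - y‖ ≤ 2 := by
      have hx1 : ‖x‖ < 1 := by rwa [← dist_zero_right, ← Metric.mem_ball]
      have hy1 : ‖y‖ < 1 := by rwa [← dist_zero_right, ← Metric.mem_ball]
      calc ‖x - y‖ ≤ ‖x‖ + ‖y‖ := norm_sub_le x y
        _ ≤ 2 := by linarith
    exact Real.rpow_le_rpow_of_nonpos hpos hlt2 (by push_cast; linarith [show (3:ℝ) ≤ d by exact_mod_cast hd])
  -- claim A
  have claimA : ∀ x ∈ B,
      ENNReal.ofReal (c' * |x i0| ^ (-1 / p))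
        ≤ ENNReal.ofReal (V x ^ (1 / 2 : ℝ)) * ∫⁻ y in B, Γ' x y := by
    intro x hx
    have h1 : ENNReal.ofReal (c' * |x i0| ^ (-1 / p))
        = ENNReal.ofReal (V x ^ (1/2 : ℝ)) * (ENNReal.ofReal κ * volume B) := by
      rw [hVhalf x hx, hc'def]
      rw [show κ * (volume B).toReal * |x i0| ^ (-1 / p)
          = |x i0| ^ (-1 / p) * (κ * (volume B).toReal) by ring]
      rw [ENNReal.ofReal_mul (by positivity), ENNReal.ofReal_mul hκ.le,
        ENNReal.ofReal_toReal hμBtop]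
    rw [h1]
    exact mul_le_mul_right (hker x hx) _
  refine ⟨⟨c', hc', claimA⟩, ?_⟩
  rw [← top_le_iff]
  calc (⊤ : ℝ≥0∞) = ENNReal.ofReal (c' ^ p) *
        ∫⁻ x in B, ENNReal.ofReal |x i0|⁻¹ := by
        rw [aux_top d hd i0, ENNReal.mul_top]
        simp only [ne_eq, ENNReal.ofReal_eq_zero, not_le]
        positivity
    _ = ∫⁻ x in B, ENNReal.ofReal (c' ^ p) * ENNReal.ofReal |x i0|⁻¹ :=
        (lintegral_const_mul' _ _ ENNReal.ofReal_ne_top).symm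
    _ ≤ ∫⁻ x in B, (ENNReal.ofReal (V x ^ (1 / 2 : ℝ)) * ∫⁻ y in B, Γ' x y) ^ p := by
        apply setLIntegral_mono' Metric.isOpen_ball.measurableSet
        intro x hx
        have h2 : ENNReal.ofReal (c' ^ p) * ENNReal.ofReal |x i0|⁻¹
            = (ENNReal.ofReal (c' * |x i0| ^ (-1 / p))) ^ p := by
          rw [ENNReal.ofReal_rpow_of_nonneg (by positivity) hp0.le]
          rw [Real.mul_rpow hc'.le (by positivity)]
          have h3 : ((|x i0| ^ (-1/p) : ℝ)) ^ p = |x i0|⁻¹ := by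
            rw [← Real.rpow_mul (abs_nonneg _),
              show (-1/p*p) = -1 by field_simp, Real.rpow_neg_one]
          rw [h3, ← ENNReal.ofReal_mul (by positivity)]
        rw [h2]
        exact ENNReal.rpow_le_rpow (claimA x hx) hp0.le
    _ ≤ ∫⁻ x, (ENNReal.ofReal (V x ^ (1 / 2 : ℝ)) * ∫⁻ y in B, Γ' x y) ^ p :=
        setLIntegral_le_lintegral _ _
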